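/- arXiv:1301.1483 — 3 statements merged into one kernel-verified Lean document; each statement's English description precedes it below -/
import Mathlib

section
/- For 0 < g < 1/2, the operator U on ℓ²(ℕ₊) defined by the matrix u(n,n') = C(n+n'-1, n-1) g^{n+n'} is a bounded operator. -/
/-- Entries of the pure CDT transfer matrix: `u(n,n') = C(n+n'-1, n-1) g^(n+n')`. -/
noncomputable def uCDT (g : ℝ) (n n' : ℕ+) : ℝ :=
  (Nat.choose ((n : ℕ) + (n' : ℕ) - 1) ((n : ℕ) - 1)) * g ^ ((n : ℕ) + (n' : ℕ))

lemma choose_le_two_pow' (m k : ℕ) : Nat.choose m k ≤ 2 ^ m := by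
  rcases le_or_gt k m with h | h
  · calc Nat.choose m k ≤ ∑ i ∈ Finset.range (m+1), Nat.choose m i :=
        Finset.single_le_sum (fun i _ => Nat.zero_le _) (by simp [Nat.lt_succ_iff, h])
      _ = 2 ^ m := Nat.sum_range_choose m
  · simp [Nat.choose_eq_zero_of_lt h]

lemma uCDT_nonneg (g : ℝ) (hg0 : 0 < g) (n n' : ℕ+) : 0 ≤ uCDT g n n' := by
  unfold uCDT
  positivity

lemma uCDT_le (g : ℝ) (hg0 : 0 < g) (n n' : ℕ+) :
    uCDT g n n' ≤ (2*g) ^ (n : ℕ) * (2*g) ^ (n' : ℕ) / 2 := by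
  unfold uCDT
  have h1 : (1 : ℕ) ≤ (n : ℕ) + (n' : ℕ) := le_trans n.one_le (Nat.le_add_right _ _)
  have hc : (Nat.choose ((n : ℕ) + (n' : ℕ) - 1) ((n : ℕ) - 1) : ℝ)
      ≤ 2 ^ ((n : ℕ) + (n' : ℕ) - 1) := by
    exact_mod_cast choose_le_two_pow' _ _
  have hgpow : (0:ℝ) ≤ g ^ ((n : ℕ) + (n' : ℕ)) := by positivity
  calc (Nat.choose ((n : ℕ) + (n' : ℕ) - 1) ((n : ℕ) - 1) : ℝ) * g ^ ((n : ℕ) + (n' : ℕ))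
      ≤ 2 ^ ((n : ℕ) + (n' : ℕ) - 1) * g ^ ((n : ℕ) + (n' : ℕ)) :=
        mul_le_mul_of_nonneg_right hc hgpow
    _ = (2*g) ^ (n : ℕ) * (2*g) ^ (n' : ℕ) / 2 := by
        rw [← pow_add, mul_pow]
        have : (2:ℝ) ^ ((n : ℕ) + (n' : ℕ) - 1) = 2 ^ ((n : ℕ) + (n' : ℕ)) / 2 := by
          rw [eq_div_iff (by norm_num : (2:ℝ) ≠ 0), ← pow_succ,
            Nat.sub_add_cancel h1]
        rw [this]; ring

/-- The matrix `u` defines a bounded operator on `ℓ²(ℕ₊)`: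
for every square-summable `ψ`, `Uψ(n) = ∑_{n'} u(n,n') ψ(n')` is square-summable,
with `‖Uψ‖ ≤ C ‖ψ‖`. -/
theorem bounded_operator (g : ℝ) (hg0 : 0 < g) (hg : g < 1 / 2) :
    ∃ C : ℝ, 0 ≤ C ∧ ∀ ψ : ℕ+ → ℝ, Summable (fun n => (ψ n) ^ 2) →
      Summable (fun n => (∑' n', uCDT g n n' * ψ n') ^ 2) ∧
      ∑' n, (∑' n', uCDT g n n' * ψ n') ^ 2 ≤ C ^ 2 * ∑' n, (ψ n) ^ 2 := by
  set q : ℝ := 2 * g with hq_def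
  have hq0 : 0 < q := by positivity
  have hq1 : q < 1 := by rw [hq_def]; linarith
  have hq2lt : q ^ 2 < 1 := by nlinarith
  have hq2nonneg : (0:ℝ) ≤ q ^ 2 := by positivity
  -- summability of geometric series over ℕ+
  have hSgeo : Summable (fun n : ℕ+ => (q ^ 2) ^ (n : ℕ)) := by
    have : Summable (fun k : ℕ => (q ^ 2) ^ k) :=
      summable_geometric_of_lt_one hq2nonneg hq2lt
    exact this.comp_injective PNat.coe_injective
  set S : ℝ := ∑' n : ℕ+, (q ^ 2) ^ (n : ℕ) with hS_def
  have hS0 : 0 ≤ S := tsum_nonneg (fun n => by positivity)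
  refine ⟨S / 2, by positivity, fun ψ hψ => ?_⟩
  set T : ℝ := ∑' n : ℕ+, (ψ n) ^ 2 with hT_def
  have hT0 : 0 ≤ T := tsum_nonneg (fun n => by positivity)
  -- summability of q^n |ψ n|
  have hpow2 : ∀ n : ℕ+, (q ^ 2) ^ (n : ℕ) = (q ^ (n : ℕ)) ^ 2 := by
    intro n; rw [← pow_mul, mul_comm, pow_mul]
  have hsum1 : Summable (fun n' : ℕ+ => q ^ (n' : ℕ) * |ψ n'|) := by
    apply Summable.of_nonneg_of_le (fun n => by positivity)
      (fun n => ?_) (((hSgeo.add hψ).div_const 2))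
    show q ^ (n : ℕ) * |ψ n| ≤ ((q ^ 2) ^ (n : ℕ) + ψ n ^ 2) / 2
    rw [hpow2 n, ← sq_abs (ψ n)]
    nlinarith [sq_nonneg (q ^ (n : ℕ) - |ψ n|)]
  set A : ℝ := ∑' n' : ℕ+, q ^ (n' : ℕ) * |ψ n'| with hA_def
  have hA0 : 0 ≤ A := tsum_nonneg (fun n => by positivity)
  -- Cauchy-Schwarz : A^2 ≤ S * T
  have hCS : A ^ 2 ≤ S * T := by
    have hA_le : A ≤ Real.sqrt (S * T) := by
      apply Summable.tsum_le_of_sum_le hsum1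
      intro s
      have hnn : 0 ≤ ∑ n ∈ s, q ^ (n : ℕ) * |ψ n| :=
        Finset.sum_nonneg (fun n _ => by positivity)
      have hsq : (∑ n ∈ s, q ^ (n : ℕ) * |ψ n|) ^ 2 ≤ S * T := by
        calc (∑ n ∈ s, q ^ (n : ℕ) * |ψ n|) ^ 2
            ≤ (∑ n ∈ s, (q ^ (n : ℕ)) ^ 2) * ∑ n ∈ s, |ψ n| ^ 2 :=
              Finset.sum_mul_sq_le_sq_mul_sq s _ _
          _ ≤ S * T := by
              apply mul_le_mul ?_ ?_ (Finset.sum_nonneg (fun n _ => by positivity)) hS0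
              · rw [show (∑ n ∈ s, (q ^ (n : ℕ)) ^ 2) = ∑ n ∈ s, (q ^ 2) ^ (n : ℕ) from
                  Finset.sum_congr rfl (fun n _ => (hpow2 n).symm)]
                exact Summable.sum_le_tsum s (fun n _ => by positivity) hSgeo
              · simp only [sq_abs]
                exact Summable.sum_le_tsum s (fun n _ => by positivity) hψ
      calc (∑ n ∈ s, q ^ (n : ℕ) * |ψ n|) = Real.sqrt ((∑ n ∈ s, q ^ (n : ℕ) * |ψ n|) ^ 2) :=
            (Real.sqrt_sq hnn).symm
        _ ≤ Real.sqrt (S * T) := Real.sqrt_le_sqrt hsq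
    calc A ^ 2 ≤ Real.sqrt (S * T) ^ 2 := pow_le_pow_left₀ hA0 hA_le 2
      _ = S * T := Real.sq_sqrt (by positivity)
  -- pointwise bound on |Uψ n|
  have hrow : ∀ n : ℕ+, Summable (fun n' : ℕ+ => uCDT g n n' * ψ n') ∧
      |∑' n', uCDT g n n' * ψ n'| ≤ q ^ (n : ℕ) / 2 * A := by
    intro n
    have hb : ∀ n' : ℕ+, |uCDT g n n' * ψ n'| ≤ q ^ (n : ℕ) / 2 * (q ^ (n' : ℕ) * |ψ n'|) := by
      intro n'
      rw [abs_mul, abs_of_nonneg (uCDT_nonneg g hg0 n n')]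
      have := uCDT_le g hg0 n n'
      have h2 : uCDT g n n' * |ψ n'| ≤ (q ^ (n:ℕ) * q ^ (n':ℕ) / 2) * |ψ n'| :=
        mul_le_mul_of_nonneg_right (by simpa [hq_def] using this) (abs_nonneg _)
      calc uCDT g n n' * |ψ n'| ≤ (q ^ (n:ℕ) * q ^ (n':ℕ) / 2) * |ψ n'| := h2
        _ = q ^ (n:ℕ) / 2 * (q ^ (n':ℕ) * |ψ n'|) := by ring
    have habs_sum : Summable (fun n' : ℕ+ => |uCDT g n n' * ψ n'|) :=
      Summable.of_nonneg_of_le (fun n' => abs_nonneg _) hb (hsum1.mul_left _)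
    have hsum : Summable (fun n' : ℕ+ => uCDT g n n' * ψ n') := habs_sum.of_abs
    refine ⟨hsum, ?_⟩
    calc |∑' n' : ℕ+, uCDT g n n' * ψ n'| ≤ ∑' n' : ℕ+, |uCDT g n n' * ψ n'| := by
          simpa [abs_mul] using norm_tsum_le_tsum_norm (f := fun n' : ℕ+ => uCDT g n n' * ψ n')
            (by simpa [abs_mul] using habs_sum)
      _ ≤ ∑' n' : ℕ+, q ^ (n : ℕ) / 2 * (q ^ (n' : ℕ) * |ψ n'|) :=
          Summable.tsum_le_tsum hb habs_sum (hsum1.mul_left _)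
      _ = q ^ (n : ℕ) / 2 * A := by rw [tsum_mul_left]
  -- square bound
  have hsq : ∀ n : ℕ+, (∑' n', uCDT g n n' * ψ n') ^ 2 ≤ (q^2) ^ (n : ℕ) * (A^2 / 4) := by
    intro n
    have h := (hrow n).2
    have : (∑' n', uCDT g n n' * ψ n') ^ 2 ≤ (q ^ (n : ℕ) / 2 * A) ^ 2 := by
      rw [← sq_abs]
      exact pow_le_pow_left₀ (abs_nonneg _) h 2
    calc (∑' n', uCDT g n n' * ψ n') ^ 2 ≤ (q ^ (n : ℕ) / 2 * A) ^ 2 := this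
      _ = (q^2) ^ (n : ℕ) * (A^2 / 4) := by rw [hpow2 n]; ring
  have hsummajor : Summable (fun n : ℕ+ => (q^2) ^ (n : ℕ) * (A^2 / 4)) := hSgeo.mul_right _
  have hsum2 : Summable (fun n : ℕ+ => (∑' n', uCDT g n n' * ψ n') ^ 2) :=
    Summable.of_nonneg_of_le (fun n => sq_nonneg _) hsq hsummajor
  refine ⟨hsum2, ?_⟩
  calc ∑' n, (∑' n', uCDT g n n' * ψ n') ^ 2
      ≤ ∑' n : ℕ+, (q^2) ^ (n : ℕ) * (A^2 / 4) := Summable.tsum_le_tsum hsq hsum2 hsummajor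
    _ = S * (A^2 / 4) := by rw [tsum_mul_right]
    _ ≤ S * ((S * T) / 4) := by
        apply mul_le_mul_of_nonneg_left (by linarith) hS0
    _ = (S / 2) ^ 2 * T := by ring
end

section
/- Suppose μ > ln(2·cosh(β)). Then the matrix geometric series M = Σ_{n=1}^∞ Tⁿ, where T = e^{-μ}[[e^β, e^{-β}],[e^{-β}, e^β]], converges and equals (e^{β-μ}/(e^{2β}(1-e^{β-μ})² - e^{-2μ})) · [[m, 1],[1, m]], where m = e^{2β} + (1-e^{4β})e^{-(β+μ)}. -/
/-!
The hypothesis says exactly that the maximal row sum `e^{-μ} (e^β + e^{-β})` of `T`, i.e. its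
`∞`-operator norm, is less than `1`. Hence the Neumann series `∑ Tⁿ` converges to `(1 - T)⁻¹`,
and `∑ Tⁿ⁺¹` is the unique `S` with `S (1 - T) = T`; the claimed closed form satisfies this
identity by `2 × 2` algebra.
-/

open Real Matrix

theorem hasSum_pow_succ_of_mul_one_sub_eq {R : Type*} [Ring R] [TopologicalSpace R]
    [IsTopologicalRing R] [T2Space R] {x S : R} (hx : Summable (x ^ ·))
    (hS : S * (1 - x) = x) : HasSum (fun n : ℕ => x ^ (n + 1)) S := by
  have hS' : S = x * ∑' n : ℕ, x ^ n := calc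
    S = S * ((1 - x) * ∑' n : ℕ, x ^ n) := by rw [hx.one_sub_mul_tsum_pow, mul_one]
    _ = x * ∑' n : ℕ, x ^ n := by rw [← mul_assoc, hS]
  simpa only [hS', pow_succ'] using hx.hasSum.mul_left x

section LinftyOp

attribute [local instance] Matrix.linftyOpNormedRing

theorem Matrix.summable_pow_of_sum_norm_lt_one {n α : Type*} [Fintype n] [DecidableEq n]
    [NormedRing α] [CompleteSpace α] (A : Matrix n n α) (hA : ∀ i, ∑ j, ‖A i j‖ < 1) :
    Summable (A ^ ·) := by
  -- the `∞`-operator norm is built to induce the product uniformity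
  have : @CompleteSpace (Matrix n n α) PseudoMetricSpace.toUniformSpace :=
    inferInstanceAs (CompleteSpace (n → n → α))
  refine summable_geometric_of_norm_lt_one ?_
  rw [Matrix.linfty_opNorm_def, ← NNReal.coe_one, NNReal.coe_lt_coe,
    Finset.sup_lt_iff zero_lt_one]
  intro i _
  rw [← NNReal.coe_lt_coe]
  simpa using hA i

end LinftyOp

/-- The transfer matrix `T` with `x = e^β` and `y = e^{-μ}`. -/
noncomputable def isingTransfer (x y : ℝ) : Matrix (Fin 2) (Fin 2) ℝ :=
  y • !![x, x⁻¹; x⁻¹, x]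

section IsingTransfer

variable {x y : ℝ}

theorem summable_pow_isingTransfer (hx : 0 < x) (hy : 0 < y) (hxy : y * (x + x⁻¹) < 1) :
    Summable (isingTransfer x y ^ ·) := by
  refine (isingTransfer x y).summable_pow_of_sum_norm_lt_one fun i => ?_
  fin_cases i <;> simpa [isingTransfer, abs_of_pos, hx, hy, mul_add, add_comm] using hxy

theorem isingTransfer_resolvent (hx : x ≠ 0)
    (hD : x ^ 2 * (1 - x * y) ^ 2 - y ^ 2 ≠ 0) :
    let m := x ^ 2 + (1 - x ^ 4) * (x⁻¹ * y)
    (x * y / (x ^ 2 * (1 - x * y) ^ 2 - y ^ 2)) • !![m, 1; 1, m] * (1 - isingTransfer x y) =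
      isingTransfer x y := by
  intro m
  ext i j
  fin_cases i <;> fin_cases j <;>
    simp only [isingTransfer, m, Matrix.mul_apply, Fin.sum_univ_two, Matrix.sub_apply,
      Matrix.smul_apply, one_apply_eq, one_apply_ne, ne_eq, zero_ne_one, one_ne_zero,
      not_false_eq_true, smul_eq_mul, of_apply, cons_val', cons_val_zero, cons_val_one,
      cons_val_fin_one, Fin.isValue, Fin.zero_eta, Fin.mk_one] <;>
    field_simp <;> ring

theorem hasSum_pow_succ_isingTransfer (hx : 0 < x) (hy : 0 < y) (hxy : y * (x + x⁻¹) < 1) :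
    let m := x ^ 2 + (1 - x ^ 4) * (x⁻¹ * y)
    HasSum (fun n : ℕ => isingTransfer x y ^ (n + 1))
      ((x * y / (x ^ 2 * (1 - x * y) ^ 2 - y ^ 2)) • !![m, 1; 1, m]) := by
  have hgap : 0 < x * (1 - x * y) - y := by
    have : x * (1 - x * y) - y = x * (1 - y * (x + x⁻¹)) := by field_simp; ring
    rw [this]
    exact mul_pos hx (sub_pos.2 hxy)
  have hD : x ^ 2 * (1 - x * y) ^ 2 - y ^ 2 ≠ 0 := by
    have : x ^ 2 * (1 - x * y) ^ 2 - y ^ 2 =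
        (x * (1 - x * y) - y) * (x * (1 - x * y) - y + 2 * y) := by ring
    rw [this]
    positivity
  exact hasSum_pow_succ_of_mul_one_sub_eq (summable_pow_isingTransfer hx hy hxy)
    (isingTransfer_resolvent hx.ne' hD)

end IsingTransfer

open Matrix in
theorem geometric_series_T (β μ : ℝ) (h : Real.log (2 * Real.cosh β) < μ) :
    let T : Matrix (Fin 2) (Fin 2) ℝ :=
      Real.exp (-μ) • !![Real.exp β, Real.exp (-β); Real.exp (-β), Real.exp β]
    let m : ℝ := Real.exp (2 * β) + (1 - Real.exp (4 * β)) * Real.exp (-(β + μ))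
    let c : ℝ := Real.exp (β - μ) /
      (Real.exp (2 * β) * (1 - Real.exp (β - μ)) ^ 2 - Real.exp (-(2 * μ)))
    HasSum (fun n : ℕ => T ^ (n + 1)) (c • !![m, 1; 1, m]) := by
  have hrow : exp (-μ) * (exp β + (exp β)⁻¹) < 1 := by
    have h' := exp_lt_exp.2 h
    rw [exp_log (by positivity), cosh_eq, exp_neg] at h'
    rw [exp_neg, inv_mul_lt_one₀ (exp_pos μ)]
    linarith
  have e2 (t : ℝ) : exp (2 * t) = exp t ^ 2 := by exact_mod_cast exp_nat_mul t 2
  have e4 : exp (4 * β) = exp β ^ 4 := by exact_mod_cast exp_nat_mul β 4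
  simp only [exp_neg β, sub_eq_add_neg β, neg_add, neg_mul_eq_mul_neg, exp_add, e2, e4]
  exact hasSum_pow_succ_isingTransfer (exp_pos β) (exp_pos (-μ)) hrow
end

section
/- Let c, m > 0 and M = c[[m,1],[1,m]]. The 4×4 matrix Q with entries Q = [[e^{2β}c²m², c²m, c²m, e^{2β}c²], [c²m, e^{-2β}c²m², e^{-2β}c², c²m], [c²m, e^{-2β}c², e^{-2β}c²m², c²m], [e^{2β}c², c²m, c²m, e^{2β}c²m²]] has characteristic polynomial with roots λ₁ = c²e^{2β}(m²-1), λ₂ = c²e^{-2β}(m²-1), and λ_{3,4} = c²(m²+1)cosh(2β)(1 ∓ √(1 - (m²-1)²/((m²+1)² cosh²(2β)))). -/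
/-!
A bisymmetric 4×4 matrix commutes with the reversal `i ↦ 3 - i`, so its characteristic polynomial
splits into those of its blocks on the antisymmetric vectors `(u, v, -v, -u)` and on the symmetric
vectors `(u, v, v, u)`. For `Q` the antisymmetric block is diagonal, with eigenvalues
`c² e^{±2β} (m² - 1)`, and the symmetric block has trace `2A`, `A = c² (m² + 1) cosh 2β`, and
determinant `c⁴ (m² - 1)²`; writing the determinant as `A² r`, `r ≤ 1`, its eigenvalues are
`A (1 ∓ √(1 - r))`.
-/

open Matrix Polynomial

theorem charpoly_bisymmetric_fin_four {R : Type*} [CommRing R] (a b c d e f : R) :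
    (!![a, b, c, d; b, e, f, c; c, f, e, b; d, c, b, a]).charpoly =
      (X ^ 2 - C (a - d + (e - f)) * X + C ((a - d) * (e - f) - (b - c) ^ 2)) *
        (X ^ 2 - C (a + d + (e + f)) * X + C ((a + d) * (e + f) - (b + c) ^ 2)) := by
  simp [Matrix.charpoly, charmatrix, Matrix.det_succ_row_zero, Fin.sum_univ_succ,
    Fin.succAbove_of_lt_succ, Fin.succAbove_of_succ_le]
  ring

theorem isRoot_charpoly_bisymmetric_fin_four {R : Type*} [CommRing R] [IsDomain R]
    (a b d e f x : R) :
    (!![a, b, b, d; b, e, f, b; b, f, e, b; d, b, b, a]).charpoly.IsRoot x ↔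
      x = a - d ∨ x = e - f ∨
        x ^ 2 - (a + d + (e + f)) * x + ((a + d) * (e + f) - (2 * b) ^ 2) = 0 := by
  have hfactor : x ^ 2 - (a - d + (e - f)) * x + ((a - d) * (e - f) - (b - b) ^ 2) =
      (x - (a - d)) * (x - (e - f)) := by ring
  simp only [charpoly_bisymmetric_fin_four, IsRoot.def, eval_mul, eval_add, eval_sub, eval_pow,
    eval_X, eval_C, hfactor, mul_eq_zero, sub_eq_zero, or_assoc, ← two_mul]

theorem quadratic_eq_zero_iff_of_le_one {A r x : ℝ} (hr : r ≤ 1) :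
    x ^ 2 - 2 * A * x + A ^ 2 * r = 0 ↔ x = A * (1 - √(1 - r)) ∨ x = A * (1 + √(1 - r)) := by
  have hs : √(1 - r) ^ 2 = 1 - r := Real.sq_sqrt (by linarith)
  have hfactor : x ^ 2 - 2 * A * x + A ^ 2 * r =
      (x - A * (1 - √(1 - r))) * (x - A * (1 + √(1 - r))) := by
    linear_combination A ^ 2 * hs
  rw [hfactor, mul_eq_zero, sub_eq_zero, sub_eq_zero]

theorem sq_sub_one_sq_div_le_one (m t : ℝ) (ht : 1 ≤ t) :
    (m ^ 2 - 1) ^ 2 / ((m ^ 2 + 1) ^ 2 * t ^ 2) ≤ 1 := by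
  rw [div_le_one (by positivity)]
  nlinarith [sq_nonneg m, one_le_pow₀ (n := 2) ht, sq_nonneg (m ^ 2 + 1)]

open Matrix in
theorem eigenvalues_Q_general (β c m : ℝ) :
    let Q : Matrix (Fin 4) (Fin 4) ℝ :=
      !![Real.exp (2*β) * c^2 * m^2, c^2 * m, c^2 * m, Real.exp (2*β) * c^2;
         c^2 * m, Real.exp (-(2*β)) * c^2 * m^2, Real.exp (-(2*β)) * c^2, c^2 * m;
         c^2 * m, Real.exp (-(2*β)) * c^2, Real.exp (-(2*β)) * c^2 * m^2, c^2 * m;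
         Real.exp (2*β) * c^2, c^2 * m, c^2 * m, Real.exp (2*β) * c^2 * m^2]
    ∀ x : ℝ, Q.charpoly.IsRoot x ↔
      x = c^2 * Real.exp (2*β) * (m^2 - 1) ∨
      x = c^2 * Real.exp (-(2*β)) * (m^2 - 1) ∨
      x = c^2 * (m^2 + 1) * Real.cosh (2*β) *
            (1 - Real.sqrt (1 - (m^2 - 1)^2 / ((m^2 + 1)^2 * Real.cosh (2*β) ^ 2))) ∨
      x = c^2 * (m^2 + 1) * Real.cosh (2*β) *
            (1 + Real.sqrt (1 - (m^2 - 1)^2 / ((m^2 + 1)^2 * Real.cosh (2*β) ^ 2))) := by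
  intro Q x
  rw [isRoot_charpoly_bisymmetric_fin_four]
  set E := Real.exp (2 * β)
  set F := Real.exp (-(2 * β))
  set A := c ^ 2 * (m ^ 2 + 1) * Real.cosh (2 * β)
  set r := (m ^ 2 - 1) ^ 2 / ((m ^ 2 + 1) ^ 2 * Real.cosh (2 * β) ^ 2)
  have hEF : E * F = 1 := by rw [← Real.exp_add, add_neg_cancel, Real.exp_zero]
  have htrace : E * c ^ 2 * m ^ 2 + E * c ^ 2 + (F * c ^ 2 * m ^ 2 + F * c ^ 2) = 2 * A := by
    simp only [A, Real.cosh_eq]; ring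
  have hdet : (E * c ^ 2 * m ^ 2 + E * c ^ 2) * (F * c ^ 2 * m ^ 2 + F * c ^ 2) -
      (2 * (c ^ 2 * m)) ^ 2 = A ^ 2 * r := by
    have : Real.cosh (2 * β) ≠ 0 := (Real.cosh_pos _).ne'
    simp only [A, r]
    field_simp
    linear_combination (c ^ 4 * (m ^ 2 + 1) ^ 2) * hEF
  rw [htrace, hdet,
    quadratic_eq_zero_iff_of_le_one (sq_sub_one_sq_div_le_one m _ (Real.one_le_cosh _)),
    show E * c ^ 2 * m ^ 2 - E * c ^ 2 = c ^ 2 * E * (m ^ 2 - 1) by ring,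
    show F * c ^ 2 * m ^ 2 - F * c ^ 2 = c ^ 2 * F * (m ^ 2 - 1) by ring]

open Matrix in
theorem eigenvalues_Q (β c m : ℝ) (hc : 0 < c) (hm : 0 < m) :
    let Q : Matrix (Fin 4) (Fin 4) ℝ :=
      !![Real.exp (2*β) * c^2 * m^2, c^2 * m, c^2 * m, Real.exp (2*β) * c^2;
         c^2 * m, Real.exp (-(2*β)) * c^2 * m^2, Real.exp (-(2*β)) * c^2, c^2 * m;
         c^2 * m, Real.exp (-(2*β)) * c^2, Real.exp (-(2*β)) * c^2 * m^2, c^2 * m;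
         Real.exp (2*β) * c^2, c^2 * m, c^2 * m, Real.exp (2*β) * c^2 * m^2]
    ∀ x : ℝ, Q.charpoly.IsRoot x ↔
      x = c^2 * Real.exp (2*β) * (m^2 - 1) ∨
      x = c^2 * Real.exp (-(2*β)) * (m^2 - 1) ∨
      x = c^2 * (m^2 + 1) * Real.cosh (2*β) *
            (1 - Real.sqrt (1 - (m^2 - 1)^2 / ((m^2 + 1)^2 * Real.cosh (2*β) ^ 2))) ∨
      x = c^2 * (m^2 + 1) * Real.cosh (2*β) *
            (1 + Real.sqrt (1 - (m^2 - 1)^2 / ((m^2 + 1)^2 * Real.cosh (2*β) ^ 2))) :=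
  eigenvalues_Q_general β c m
end
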